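/- Let N ≥ 1, H = ℂ^N with orthonormal basis (ζ_j)_{j=0}^{N−1}, indices modulo N. Define ψ_{nm} := N^{−1/2} Σ_{j=0}^{N−1} e^{2πi j n / N} ζ_j ⊗ ζ_{j+m} ∈ H ⊗ H, let P_{nm} be the orthogonal projection onto ℂ·ψ_{nm}, and define the operator U_{nm} on H by U_{nm}(η) = Σ_{j=0}^{N−1} e^{2πi j n / N} ⟨ζ_{j+m}, η⟩ ζ_j. Then for every linear operator φ on H, Σ_{n,m=0}^{N−1} U_{nm} · Tr_{1,2}[(P_{nm} ⊗ I_H)(φ ⊗ P_{00})] · U_{nm}† = φ, where Tr_{1,2} denotes the partial trace over the first two tensor factors of H ⊗ H ⊗ H and φ ⊗ P_{00} is an operator on H ⊗ (H ⊗ H). In particular, the quantum teleportation protocol — Alice's Bell-basis measurement described by the quantum-classical channel σ ↦ Σ_{nm} tr(P_{nm} σ) χ_{nm} followed by Bob's correction b ⊗ σ ↦ Σ_{nm} b(x_{nm}) U_{nm} σ U_{nm}† — maps every input state φ to itself. -/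

import Mathlib

/-!
Let `K_{nm}` (`bellKraus`) be the matrix of `η ↦ (⟨ψ_{nm}| ⊗ I)(η ⊗ ψ_{00})`. The partial trace of
`(P_{nm} ⊗ I)(φ ⊗ P_{00})` over the first two factors is `K_{nm} φ K_{nm}†`, and orthonormality
of `ζ` collapses the overlap sums to give `K_{nm} = N⁻¹ U_{nm}†`. As `U_{nm}` is unitary, each of
the `N²` corrected outcomes `U_{nm} T_{nm} U_{nm}†` equals `N⁻² φ`, and they add up to `φ`.
-/

open scoped Matrix

namespace Teleport

variable (N : ℕ) [NeZero N]

/-- The generalized Bell state `ψ_{nm}` as a vector in `ℂ^N ⊗ ℂ^N` (concretely indexed by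
`Fin N × Fin N`), built from the orthonormal family `ζ`. -/
noncomputable def ψv (ζ : Fin N → Fin N → ℂ) (nn mm : Fin N) : Fin N × Fin N → ℂ :=
  fun p => (Real.sqrt N : ℂ)⁻¹ * ∑ j : Fin N,
    Complex.exp (2 * Real.pi * Complex.I * ((j : ℕ) : ℂ) * ((nn : ℕ) : ℂ) / (N : ℂ)) *
      ζ j p.1 * ζ (j + mm) p.2

/-- The orthogonal projection `P_{nm} = |ψ_{nm}⟩⟨ψ_{nm}|` as a matrix. -/
noncomputable def P (ζ : Fin N → Fin N → ℂ) (nn mm : Fin N) :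
    Matrix (Fin N × Fin N) (Fin N × Fin N) ℂ :=
  Matrix.of fun p q => ψv N ζ nn mm p * (starRingEnd ℂ) (ψv N ζ nn mm q)

/-- Bob's correction unitary `U_{nm} = Σ_j e^{2πijn/N} |ζ_j⟩⟨ζ_{j+m}|`. -/
noncomputable def U (ζ : Fin N → Fin N → ℂ) (nn mm : Fin N) : Matrix (Fin N) (Fin N) ℂ :=
  Matrix.of fun a b => ∑ j : Fin N,
    Complex.exp (2 * Real.pi * Complex.I * ((j : ℕ) : ℂ) * ((nn : ℕ) : ℂ) / (N : ℂ)) *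
      ζ j a * (starRingEnd ℂ) (ζ (j + mm) b)

/-- The operator `P_{nm} ⊗ I` on `H ⊗ H ⊗ H` (factors (1,2) and 3). -/
noncomputable def bigA (ζ : Fin N → Fin N → ℂ) (nn mm : Fin N) :
    Matrix (Fin N × Fin N × Fin N) (Fin N × Fin N × Fin N) ℂ :=
  Matrix.of fun p q =>
    P N ζ nn mm (p.1, p.2.1) (q.1, q.2.1) * (if p.2.2 = q.2.2 then 1 else 0)

/-- The operator `φ ⊗ P_{00}` on `H ⊗ H ⊗ H` (factor 1 and factors (2,3)). -/
noncomputable def bigB (ζ : Fin N → Fin N → ℂ) (φ : Matrix (Fin N) (Fin N) ℂ) :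
    Matrix (Fin N × Fin N × Fin N) (Fin N × Fin N × Fin N) ℂ :=
  Matrix.of fun p q => φ p.1 q.1 * P N ζ 0 0 (p.2.1, p.2.2) (q.2.1, q.2.2)

/-- The operator `I ⊗ I ⊗ B` on `H ⊗ H ⊗ H`. -/
noncomputable def bigI (B : Matrix (Fin N) (Fin N) ℂ) :
    Matrix (Fin N × Fin N × Fin N) (Fin N × Fin N × Fin N) ℂ :=
  Matrix.of fun p q =>
    (if p.1 = q.1 then 1 else 0) * (if p.2.1 = q.2.1 then 1 else 0) * B p.2.2 q.2.2

lemma exp_mul_conj_exp_of_re_eq_zero {z : ℂ} (hz : z.re = 0) :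
    Complex.exp z * (starRingEnd ℂ) (Complex.exp z) = 1 := by
  rw [Complex.mul_conj', Complex.norm_exp, hz, Real.exp_zero, Complex.ofReal_one, one_pow]

lemma sum_mul_conj_eq_ite_of_orthonormal {ι : Type*} [Fintype ι] [DecidableEq ι]
    (ζ : ι → ι → ℂ)
    (hζ : ∀ j k, (∑ a, (starRingEnd ℂ) (ζ j a) * ζ k a) = if j = k then 1 else 0) (a b : ι) :
    (∑ j, ζ j a * (starRingEnd ℂ) (ζ j b)) = if a = b then 1 else 0 := by
  let Z : Matrix ι ι ℂ := Matrix.of fun a j => ζ j a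
  have hZ : Zᴴ * Z = 1 := by
    ext j k
    simp [Z, Matrix.mul_apply, hζ, Matrix.one_apply]
  have hZ' : Z * Zᴴ = 1 := mul_eq_one_comm.mp hZ
  simpa [Z, Matrix.mul_apply, Matrix.one_apply] using congrFun₂ hZ' a b

omit [NeZero N] in
lemma U_mul_conjTranspose (ζ : Fin N → Fin N → ℂ)
    (hζ : ∀ j k : Fin N, (∑ a : Fin N, (starRingEnd ℂ) (ζ j a) * ζ k a) = if j = k then 1 else 0)
    (nn mm : Fin N) : U N ζ nn mm * (U N ζ nn mm)ᴴ = 1 := by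
  ext a b
  set e : Fin N → ℂ := fun j =>
    Complex.exp (2 * Real.pi * Complex.I * ((j : ℕ) : ℂ) * ((nn : ℕ) : ℂ) / (N : ℂ))
  have he : ∀ j, e j * (starRingEnd ℂ) (e j) = 1 := fun j =>
    exp_mul_conj_exp_of_re_eq_zero (by simp [Complex.div_re, Complex.mul_re, Complex.mul_im])
  calc (U N ζ nn mm * (U N ζ nn mm)ᴴ) a b
      = ∑ j, ∑ k, e j * star (e k) * ζ j a * star (ζ k b) *
          ∑ c, star (ζ (j + mm) c) * ζ (k + mm) c := by
        simp only [Matrix.mul_apply, Matrix.conjTranspose_apply, U, Matrix.of_apply, star_sum,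
          star_mul', Finset.mul_sum, Finset.sum_mul]
        rw [Finset.sum_comm_cycle]
        refine Finset.sum_congr rfl fun j _ => ?_
        rw [Finset.sum_comm]
        refine Finset.sum_congr rfl fun k _ => Finset.sum_congr rfl fun c _ => ?_
        simp only [Complex.star_def, Complex.conj_conj]
        ring
    _ = ∑ j, ζ j a * star (ζ j b) := by
        simp [hζ, he]
    _ = (1 : Matrix (Fin N) (Fin N) ℂ) a b := by
        simpa [Matrix.one_apply] using sum_mul_conj_eq_ite_of_orthonormal ζ hζ a b

noncomputable def bellKraus (ζ : Fin N → Fin N → ℂ) (nn mm : Fin N) : Matrix (Fin N) (Fin N) ℂ :=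
  Matrix.of fun c a => ∑ b, star (ψv N ζ nn mm (a, b)) * ψv N ζ 0 0 (b, c)

theorem trace_bigA_mul_bigB_mul_bigI (ζ : Fin N → Fin N → ℂ) (φ B : Matrix (Fin N) (Fin N) ℂ)
    (nn mm : Fin N) :
    ((bigA N ζ nn mm * bigB N ζ φ) * bigI N B).trace =
      (bellKraus N ζ nn mm * φ * (bellKraus N ζ nn mm)ᴴ * B).trace := by
  simp only [Matrix.trace, Matrix.diag, Matrix.mul_apply, bigA, bigB, bigI, P, bellKraus,
    Matrix.conjTranspose_apply, Matrix.of_apply, Fintype.sum_prod_type, mul_ite, ite_mul, mul_one,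
    one_mul, mul_zero, zero_mul, Finset.sum_ite_eq, Finset.sum_ite_eq', Finset.mem_univ, if_true,
    Finset.sum_mul, Finset.mul_sum, star_sum, star_mul', star_star, Finset.sum_ite_irrel,
    Finset.sum_const_zero]
  conv_lhs => enter [2, p1]; rw [Finset.sum_comm]
  rw [Finset.sum_comm]
  conv_lhs => enter [2, p22, 2, p1]; rw [Finset.sum_comm]
  conv_lhs => enter [2, p22]; rw [Finset.sum_comm]
  refine Finset.sum_congr rfl fun _ _ => Finset.sum_congr rfl fun _ _ =>
    Finset.sum_congr rfl fun _ _ => Finset.sum_congr rfl fun _ _ =>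
    Finset.sum_congr rfl fun _ _ => Finset.sum_congr rfl fun _ _ => ?_
  simp only [Complex.star_def]
  ring

lemma ψv_zero_zero (ζ : Fin N → Fin N → ℂ) (b c : Fin N) :
    ψv N ζ 0 0 (b, c) = (Real.sqrt N : ℂ)⁻¹ * ∑ k, ζ k b * ζ k c := by
  simp [ψv]

lemma bellKraus_eq_smul_conjTranspose_U (ζ : Fin N → Fin N → ℂ)
    (hζ : ∀ j k : Fin N, (∑ a : Fin N, (starRingEnd ℂ) (ζ j a) * ζ k a) = if j = k then 1 else 0)
    (nn mm : Fin N) : bellKraus N ζ nn mm = (N : ℂ)⁻¹ • (U N ζ nn mm)ᴴ := by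
  ext c a
  set e : Fin N → ℂ := fun j =>
    Complex.exp (2 * Real.pi * Complex.I * ((j : ℕ) : ℂ) * ((nn : ℕ) : ℂ) / (N : ℂ))
  have hs : (Real.sqrt N : ℂ)⁻¹ * (Real.sqrt N : ℂ)⁻¹ = (N : ℂ)⁻¹ := by
    rw [← mul_inv, ← Complex.ofReal_mul, Real.mul_self_sqrt (Nat.cast_nonneg N),
      Complex.ofReal_natCast]
  calc bellKraus N ζ nn mm c a
      = (Real.sqrt N : ℂ)⁻¹ * (Real.sqrt N : ℂ)⁻¹ * ∑ j, ∑ k,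
          star (e j * ζ j a) * ζ k c * ∑ b, star (ζ (j + mm) b) * ζ k b := by
        simp only [bellKraus, Matrix.of_apply, ψv_zero_zero]
        simp only [ψv, star_mul', star_sum, Finset.mul_sum, Finset.sum_mul]
        rw [Finset.sum_comm_cycle]
        refine Finset.sum_congr rfl fun j _ => ?_
        rw [Finset.sum_comm]
        refine Finset.sum_congr rfl fun k _ => Finset.sum_congr rfl fun b _ => ?_
        simp only [e, Complex.star_def, map_inv₀, Complex.conj_ofReal]
        ring
    _ = (N : ℂ)⁻¹ * ∑ j, star (e j * ζ j a) * ζ (j + mm) c := by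
        simp [hζ, hs]
    _ = ((N : ℂ)⁻¹ • (U N ζ nn mm)ᴴ) c a := by
        simp [U, e, star_sum, mul_assoc]

/-- Validity of the `N`-dimensional quantum teleportation protocol:
if `T n m` is the partial trace over the first two factors of
`(P_{nm} ⊗ I)·(φ ⊗ P_{00})` — characterized by `tr(T·B) = tr(X·(I⊗I⊗B))` — then
`Σ_{n,m} U_{nm} · T n m · U_{nm}† = φ`. -/
theorem stmt18 (ζ : Fin N → Fin N → ℂ)
    (hζ : ∀ j k : Fin N,
      (∑ a : Fin N, (starRingEnd ℂ) (ζ j a) * ζ k a) = if j = k then 1 else 0)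
    (φ : Matrix (Fin N) (Fin N) ℂ)
    (T : Fin N → Fin N → Matrix (Fin N) (Fin N) ℂ)
    (hT : ∀ (nn mm : Fin N) (B : Matrix (Fin N) (Fin N) ℂ),
      Matrix.trace (T nn mm * B) =
        Matrix.trace ((bigA N ζ nn mm * bigB N ζ φ) * bigI N B)) :
    (∑ nn : Fin N, ∑ mm : Fin N, U N ζ nn mm * T nn mm * (U N ζ nn mm)ᴴ) = φ := by
  have hterm (nn mm : Fin N) :
      U N ζ nn mm * T nn mm * (U N ζ nn mm)ᴴ = ((N : ℂ) * N)⁻¹ • φ := by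
    have hT_eq : T nn mm = bellKraus N ζ nn mm * φ * (bellKraus N ζ nn mm)ᴴ :=
      Matrix.ext_iff_trace_mul_right.mpr fun B =>
        (hT nn mm B).trans (trace_bigA_mul_bigB_mul_bigI N ζ φ B nn mm)
    have hU := U_mul_conjTranspose N ζ hζ nn mm
    rw [hT_eq, bellKraus_eq_smul_conjTranspose_U N ζ hζ]
    simp only [Algebra.smul_mul_assoc, Matrix.conjTranspose_smul, star_inv₀, star_natCast,
      Matrix.conjTranspose_conjTranspose, Algebra.mul_smul_comm, smul_smul, ← Matrix.mul_assoc, hU,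
      one_mul, mul_inv_rev]
    rw [Matrix.mul_assoc, hU, Matrix.mul_one]
  have hN : (N : ℂ) ≠ 0 := Nat.cast_ne_zero.mpr (NeZero.ne N)
  simp only [hterm, Finset.sum_const, Finset.card_univ, Fintype.card_fin,
    ← Nat.cast_smul_eq_nsmul ℂ, smul_smul]
  rw [show (N : ℂ) * ((N : ℂ) * ((N : ℂ) * N)⁻¹) = 1 by field_simp, one_smul]

end Teleport
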